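/- For every n ≥ 1, the code A_n of Construction 3 begins with the n+2 codewords 0, e_n, e_{n−1}+e_n, ..., Σ_{i=0}^{n} e_i (the j-th codeword having 1s exactly in positions n−j+2 through n for j ≥ 2). -/

import Mathlib

/-- Codewords `c` and `d` differ exactly at coordinate `i` (1-based), by `±1` there. -/
def TransAt {m : ℕ} (c d : List (ZMod m)) (i : ℕ) : Prop :=
  1 ≤ i ∧ i ≤ c.length ∧ c.length = d.length ∧
  c.take (i-1) = d.take (i-1) ∧ c.drop i = d.drop i ∧
  (d.getD (i-1) 0 = c.getD (i-1) 0 + 1 ∨ d.getD (i-1) 0 = c.getD (i-1) 0 - 1)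

/-- Cyclic Gray code whose transition positions `δ` are integers;
position `p ∈ ℤ` corresponds to 1-based coordinate `p + o`. -/
def CyclicGrayZ {m : ℕ} (C : List (List (ZMod m))) (o : ℕ) (δ : ℕ → ℤ) : Prop :=
  C.Nodup ∧ ∀ i < C.length, ∃ j : ℕ, (j : ℤ) = δ i + o ∧
    TransAt (C.getD i []) (C.getD ((i+1) % C.length) []) j

/-- Non-cyclic Gray code with integer transition positions, offset `o`. -/
def PathGrayZ {m : ℕ} (C : List (List (ZMod m))) (o : ℕ) (δ : ℕ → ℤ) : Prop :=
  C.Nodup ∧ ∀ i, i + 1 < C.length → ∃ j : ℕ, (j : ℤ) = δ i + o ∧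
    TransAt (C.getD i []) (C.getD (i+1) []) j

/-- `B_{n+1}` from `A_n` in Construction 3: the all-zero word followed by the four blocks
`(0,A_n,1)`, `(1,reverse A_n,1)`, `(1,A_n,0)`, `(0, reverse of A_n minus first word ,0)`. -/
def buildB3 (An : List (List (ZMod 2))) (len : ℕ) : List (List (ZMod 2)) :=
  List.replicate len (0 : ZMod 2) ::
    (An.map (fun c => 0 :: c ++ [1]) ++ An.reverse.map (fun c => 1 :: c ++ [1]) ++
     An.map (fun c => 1 :: c ++ [0]) ++ An.tail.reverse.map (fun c => 0 :: c ++ [0]))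

/-- The words `Σ_{i=1}^{j} e_{-i} + Σ_{i=1}^{n} e_i`, `j = 1, …, n+1`,
as lists of length `2n+3` (positions `-(n+1), …, n+1`). -/
def newWords (n : ℕ) : List (List (ZMod 2)) :=
  (List.range (n+1)).map (fun j =>
    List.replicate (n-j) (0 : ZMod 2) ++ List.replicate (j+1) 1 ++ [0] ++
      List.replicate n 1 ++ [0])

/-- Construction 3, codes `A_n` (length `2n+1`, positions `-n, …, n`). -/
def c3A : ℕ → List (List (ZMod 2))
  | 0 => []
  | 1 => [[0,0,0],[0,0,1],[0,1,1],[1,1,1]]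
  | (n+2) =>
    let B := buildB3 (c3A (n+1)) (2*n+5)
    B.take (B.length - n) ++ newWords (n+1)

/-- Construction 3, codes `B_n` (length `2n+1`). -/
def c3B : ℕ → List (List (ZMod 2))
  | 0 => []
  | (n+1) => buildB3 (c3A n) (2*n+3)

/-!
Induction on `n`. Since `B_{n+1}` starts with the zero word followed by `A_n` framed as
`(0, c, 1)`, the words `0, e_{n+1}, …, Σ_{i=0}^{n+1} e_i` of `A_{n+1}` are the zero word
followed by the corresponding `n+2` words of `A_n` framed that way. Passing from `B_{n+1}`
to `A_{n+1}` only replaces the last `n-1` of its `4 |A_n| ≥ 4(n+2)` words, so these survive.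
-/

def c3Prefix (n : ℕ) : List (List (ZMod 2)) :=
  (List.range (n+2)).map (fun j => List.replicate (2*n+1-j) (0 : ZMod 2) ++ List.replicate j 1)

lemma c3Prefix_length (n : ℕ) : (c3Prefix n).length = n + 2 := by simp [c3Prefix]

lemma c3Prefix_succ_succ (n : ℕ) :
    c3Prefix (n+2) = List.replicate (2*n+5) 0 ::
      (c3Prefix (n+1)).map (fun c => 0 :: c ++ [1]) := by
  rw [c3Prefix, List.range_succ_eq_map, List.map_cons, List.map_map, c3Prefix, List.map_map]
  congr 1
  · simp only [Nat.sub_zero, List.replicate_zero, List.append_nil]; ring_nf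
  refine List.map_congr_left fun j hj => ?_
  have hj : j < n + 3 := List.mem_range.mp hj
  rw [Function.comp_apply, Function.comp_apply, show 2*(n+2)+1-(j+1) = (2*(n+1)+1-j)+1 by omega,
    List.replicate_succ, List.replicate_succ']
  simp

lemma length_buildB3 (A : List (List (ZMod 2))) (len : ℕ) (hA : A ≠ []) :
    (buildB3 A len).length = 4 * A.length := by
  have := List.length_pos_iff.mpr hA
  simp only [buildB3, List.length_cons, List.length_append, List.length_map, List.length_reverse,
    List.length_tail]
  omega

lemma c3A_add_two (n : ℕ) :
    c3A (n+2) = (buildB3 (c3A (n+1)) (2*n+5)).take ((buildB3 (c3A (n+1)) (2*n+5)).length - n)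
      ++ newWords (n+1) := rfl

lemma c3Prefix_prefix_buildB3 {n : ℕ} {A : List (List (ZMod 2))} (h : c3Prefix (n+1) <+: A) :
    c3Prefix (n+2) <+: buildB3 A (2*n+5) := by
  rw [c3Prefix_succ_succ, buildB3, List.cons_prefix_cons]
  simp only [List.append_assoc, true_and]
  exact (h.map _).trans (List.prefix_append _ _)

lemma c3Prefix_prefix_c3A (n : ℕ) : c3Prefix (n+1) <+: c3A (n+1) := by
  induction n with
  | zero => decide
  | succ n ih =>
    set A := c3A (n+1)
    have hA : n + 3 ≤ A.length := c3Prefix_length (n+1) ▸ ih.length_le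
    have hB := c3Prefix_prefix_buildB3 ih
    rw [c3A_add_two]
    refine (List.prefix_take_iff.mpr ⟨hB, ?_⟩).trans (List.prefix_append _ _)
    rw [c3Prefix_length, length_buildB3 A _ (List.ne_nil_of_length_pos (by omega))]
    omega

theorem stmt10 : ∀ n : ℕ, 1 ≤ n →
    ((List.range (n+2)).map
      (fun j => List.replicate (2*n+1-j) (0 : ZMod 2) ++ List.replicate j 1)) <+: c3A n := by
  intro n hn
  obtain ⟨m, rfl⟩ := Nat.exists_eq_add_of_le' hn
  exact c3Prefix_prefix_c3A m
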